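/- For the affine-realization construction with threshold θ = (1 + d‖C‖_∞) max{|a|,|b|} + s + |s|, the membrane potential P_v(t) = t − d′ − T_in + ∑_{i=1}^d c_i x_i stays below θ for all x ∈ [a,b]^d and all t in [x_min + T_in + d′, x_max + T_in + d′], where x_min = min{x_1,…,x_d,0} and x_max = max{x_1,…,x_d,0}; hence the output neuron fires only after the last input spike arrives. -/
import Mathlib


/-- in the affine-realization construction with threshold
`θ = (1 + d‖C‖_∞) max{|a|,|b|} + s + |s|`, the membrane potential
`P_v(t) = t − d' − T_in + ∑ c_i x_i` stays below `θ` for all `x ∈ [a,b]^d` and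
all `t ∈ [x_min + T_in + d', x_max + T_in + d']`, where
`x_min = min{x_1,…,x_d,0}` and `x_max = max{x_1,…,x_d,0}`; hence the output
neuron fires only after the last input spike arrives. -/
theorem stmt16 (d : ℕ) (C : Fin d → ℝ) (s a b Tin d' : ℝ) (hd' : 0 ≤ d') (hab : a ≤ b)
    (x : Fin d → ℝ) (hx : ∀ i, x i ∈ Set.Icc a b) (t : ℝ)
    (ht : t ∈ Set.Icc (min (⨅ i, x i) 0 + Tin + d') (max (⨆ i, x i) 0 + Tin + d')) :
    t - d' - Tin + ∑ i, C i * x i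
      ≤ (1 + (d : ℝ) * (⨆ i, |C i|)) * max |a| |b| + s + |s| := by
  set M := max |a| |b| with hM
  have hM0 : (0:ℝ) ≤ M := le_trans (abs_nonneg a) (le_max_left _ _)
  have hxM : ∀ i, |x i| ≤ M := by
    intro i
    rcases hx i with ⟨h1, h2⟩
    rcases abs_le.mpr ⟨neg_abs_le a |>.trans h1 |> le_trans (neg_le_neg (le_max_left |a| |b|)), h2.trans ((le_abs_self b).trans (le_max_right _ _))⟩ with h
    exact h
  -- bound on t - d' - Tin
  have hsup : (⨆ i, x i) ≤ M := by
    rcases Nat.eq_zero_or_pos d with h0 | hpos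
    · subst h0
      simp [Real.iSup_of_isEmpty, hM0]
    · haveI : Nonempty (Fin d) := Fin.pos_iff_nonempty.mp hpos
      exact ciSup_le fun i => (le_abs_self _).trans (hxM i)
  have ht2 : t ≤ max (⨆ i, x i) 0 + Tin + d' := ht.2
  have h1 : t - d' - Tin ≤ M := by
    have : max (⨆ i, x i) 0 ≤ M := max_le hsup hM0
    linarith
  -- bound on sum
  have hCsup : ∀ i, |C i| ≤ ⨆ j, |C j| := fun i =>
    le_ciSup (f := fun j => |C j|) (Set.Finite.bddAbove (Set.finite_range _)) i
  have hsum : (∑ i, C i * x i) ≤ (d : ℝ) * (⨆ i, |C i|) * M := by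
    calc (∑ i, C i * x i) ≤ ∑ i, (⨆ j, |C j|) * M := by
          apply Finset.sum_le_sum
          intro i _
          calc C i * x i ≤ |C i * x i| := le_abs_self _
            _ = |C i| * |x i| := abs_mul _ _
            _ ≤ (⨆ j, |C j|) * M :=
              mul_le_mul (hCsup i) (hxM i) (abs_nonneg _) ((abs_nonneg (C i)).trans (hCsup i))
      _ = (d : ℝ) * (⨆ i, |C i|) * M := by
          simp [Finset.sum_const, mul_assoc]
  have hs : 0 ≤ s + |s| := by
    rcases abs_cases s with ⟨h, _⟩ | ⟨h, _⟩ <;> linarith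
  nlinarith [hsum, h1, hs]
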